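/- arXiv:2006.00734 — 4 statements merged into one kernel-verified Lean document; each statement's English description precedes it below -/
import Mathlib

section
/- Every 3-dimensional nilpotent algebra over the complex numbers is a CD-algebra. -/
/-- The three degree-4 identities defining a CD-algebra. -/
def IsCD {A : Type*} [AddCommGroup A] (m : A → A → A) : Prop :=
  (∀ a b x y : A,
      m (m (m x y) a) b - m (m (m x y) b) a =
        m (m (m x a) b - m (m x b) a) y + m x (m (m y a) b - m (m y b) a)) ∧
  (∀ a b x y : A,
      m (m a (m x y)) b - m a (m (m x y) b) =
        m (m (m a x) b - m a (m x b)) y + m x (m (m a y) b - m a (m y b))) ∧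
  (∀ a b x y : A,
      m a (m b (m x y)) - m b (m a (m x y)) =
        m (m a (m b x) - m b (m a x)) y + m x (m a (m b y) - m b (m a y)))

/-- The CD-cocycle conditions for a map `θ : A × A → V`. -/
def IsCDCocycle {A V : Type*} [AddCommGroup A] [AddCommGroup V]
    (m : A → A → A) (θ : A → A → V) : Prop :=
  (∀ a b x y : A,
      θ (m (m x y) a) b - θ (m (m x y) b) a =
        θ (m (m x a) b - m (m x b) a) y + θ x (m (m y a) b - m (m y b) a)) ∧
  (∀ a b x y : A,
      θ (m a (m x y)) b - θ a (m (m x y) b) =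
        θ (m (m a x) b - m a (m x b)) y + θ x (m (m a y) b - m a (m y b))) ∧
  (∀ a b x y : A,
      θ a (m b (m x y)) - θ b (m a (m x y)) =
        θ (m a (m b x) - m b (m a x)) y + θ x (m a (m b y) - m b (m a y)))

/-- Evaluation of a nonassociative word in `A` under the multiplication `m`. -/
def magEval {A : Type*} (m : A → A → A) : FreeMagma A → A
  | FreeMagma.of a => a
  | FreeMagma.mul x y => m (magEval m x) (magEval m y)

/-- The number of letters of a nonassociative word. -/
def magLen {A : Type*} : FreeMagma A → ℕ
  | FreeMagma.of _ => 1
  | FreeMagma.mul x y => magLen x + magLen y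

/-- An algebra is nilpotent iff all sufficiently long products vanish. -/
def IsNilpotentMul {A : Type*} [AddCommGroup A] (m : A → A → A) : Prop :=
  ∃ n : ℕ, ∀ w : FreeMagma A, n ≤ magLen w → magEval m w = 0


/-! Multiplying by one element at a time, on either side, gives a chain
`A = A₁ ⊇ A₂ ⊇ A₃ ⊇ ⋯` in which `A_{k+1}` is determined by `A_k` alone, so once two
consecutive terms agree the chain is constant from there on; as `A_k` consists of products of
`k` factors, nilpotency forces that constant value to be `0`. Hence in dimension `3` the chain
drops strictly until `A₄ = 0`. Every term of the three CD identities is a triple product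
multiplied by a single element, so it lies in `A₄` and vanishes. (The span of all products of at
least `k` factors would not do: there `A_{k+1}` also contains products of two factors that are
both shorter than `k`.) -/

open Module

section Powers

variable {R A : Type*} [CommRing R] [AddCommGroup A] [Module R A] (m : A →ₗ[R] A →ₗ[R] A)

def wordSpan (n : ℕ) : Submodule R A :=
  Submodule.span R
    {x | ∃ w : FreeMagma A, n ≤ magLen w ∧ magEval (fun a b : A => m a b) w = x}

lemma wordSpan_one : wordSpan m 1 = ⊤ :=
  eq_top_iff.2 fun x _ => Submodule.subset_span ⟨.of x, le_rfl, rfl⟩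

lemma map₂_wordSpan_le (i j : ℕ) :
    Submodule.map₂ m (wordSpan m i) (wordSpan m j) ≤ wordSpan m (i + j) := by
  rw [wordSpan, wordSpan, Submodule.map₂_span_span, Submodule.span_le]
  rintro _ ⟨_, ⟨u, hu, rfl⟩, _, ⟨v, hv, rfl⟩, rfl⟩
  exact Submodule.subset_span ⟨.mul u v, by simp only [magLen]; omega, rfl⟩

lemma IsNilpotentMul.exists_wordSpan_eq_bot (hnil : IsNilpotentMul (fun a b : A => m a b)) :
    ∃ n, wordSpan m n = ⊥ := by
  obtain ⟨n, hn⟩ := hnil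
  refine ⟨n, (Submodule.span_eq_bot).2 ?_⟩
  rintro _ ⟨w, hw, rfl⟩
  exact hn w hw

/-- `stepPower m k` is `A_{k+1}`. -/
def stepPower : ℕ → Submodule R A
  | 0 => ⊤
  | k + 1 => Submodule.map₂ m (stepPower k) ⊤ ⊔ Submodule.map₂ m ⊤ (stepPower k)

lemma stepPower_succ (k : ℕ) :
    stepPower m (k + 1) =
      Submodule.map₂ m (stepPower m k) ⊤ ⊔ Submodule.map₂ m ⊤ (stepPower m k) :=
  rfl

lemma stepPower_succ_le : ∀ k, stepPower m (k + 1) ≤ stepPower m k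
  | 0 => le_top
  | k + 1 => by
    rw [stepPower_succ m (k + 1), stepPower_succ m k]
    have := stepPower_succ_le k
    exact sup_le_sup (Submodule.map₂_le_map₂_left this) (Submodule.map₂_le_map₂_right this)

lemma stepPower_le_wordSpan : ∀ k, stepPower m k ≤ wordSpan m (k + 1)
  | 0 => (wordSpan_one m).ge
  | k + 1 => by
    have ih := stepPower_le_wordSpan k
    have htop : (⊤ : Submodule R A) ≤ wordSpan m 1 := (wordSpan_one m).ge
    rw [stepPower_succ]
    refine sup_le ((Submodule.map₂_le_map₂ ih htop).trans (map₂_wordSpan_le m _ _)) ?_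
    have := (Submodule.map₂_le_map₂ htop ih).trans (map₂_wordSpan_le m _ _)
    rwa [add_comm 1] at this

lemma stepPower_add_eq_of_succ_eq {k : ℕ} (h : stepPower m (k + 1) = stepPower m k) :
    ∀ j, stepPower m (k + j) = stepPower m k
  | 0 => rfl
  | j + 1 => by
    rw [← add_assoc, stepPower_succ, stepPower_add_eq_of_succ_eq h j, ← stepPower_succ, h]

lemma stepPower_eq_bot_of_succ_eq (hnil : IsNilpotentMul (fun a b : A => m a b)) {k : ℕ}
    (h : stepPower m (k + 1) = stepPower m k) : stepPower m k = ⊥ := by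
  obtain ⟨n, hn⟩ := hnil.exists_wordSpan_eq_bot
  rw [← stepPower_add_eq_of_succ_eq m h n, eq_bot_iff, ← hn]
  exact (stepPower_le_wordSpan m _).trans
    (Submodule.span_mono fun _ ⟨w, hw, hx⟩ => ⟨w, by omega, hx⟩)

lemma isCD_of_stepPower_three_eq_bot (h : stepPower m 3 = ⊥) : IsCD (fun a b : A => m a b) := by
  have hL : ∀ p ∈ stepPower m 2, ∀ x, m p x = 0 := fun p hp x => by
    rw [← Submodule.mem_bot R, ← h, stepPower_succ]
    exact Submodule.mem_sup_left (Submodule.apply_mem_map₂ m hp trivial)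
  have hR : ∀ p ∈ stepPower m 2, ∀ x, m x p = 0 := fun p hp x => by
    rw [← Submodule.mem_bot R, ← h, stepPower_succ]
    exact Submodule.mem_sup_right (Submodule.apply_mem_map₂ m trivial hp)
  have hpair : ∀ x y, m x y ∈ stepPower m 1 := fun x y =>
    Submodule.mem_sup_left (Submodule.apply_mem_map₂ m trivial trivial)
  have h3L : ∀ x y z, m (m x y) z ∈ stepPower m 2 := fun x y z =>
    Submodule.mem_sup_left (Submodule.apply_mem_map₂ m (hpair x y) trivial)
  have h3R : ∀ x y z, m z (m x y) ∈ stepPower m 2 := fun x y z =>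
    Submodule.mem_sup_right (Submodule.apply_mem_map₂ m trivial (hpair x y))
  refine ⟨fun a b x y => ?_, fun a b x y => ?_, fun a b x y => ?_⟩ <;> beta_reduce
  · rw [hL _ (h3L x y a) b, hL _ (h3L x y b) a,
      hL _ (sub_mem (h3L x a b) (h3L x b a)) y, hR _ (sub_mem (h3L y a b) (h3L y b a)) x]
    simp
  · rw [hL _ (h3R x y a) b, hR _ (h3L x y b) a,
      hL _ (sub_mem (h3L a x b) (h3R x b a)) y, hR _ (sub_mem (h3L a y b) (h3R y b a)) x]
    simp
  · rw [hR _ (h3R x y b) a, hR _ (h3R x y a) b,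
      hL _ (sub_mem (h3R b x a) (h3R a x b)) y, hR _ (sub_mem (h3R b y a) (h3R a y b)) x]
    simp

end Powers

section FiniteDimensional

variable {K A : Type*} [Field K] [AddCommGroup A] [Module K A] [FiniteDimensional K A]
  (m : A →ₗ[K] A →ₗ[K] A)

lemma finrank_stepPower_le (hnil : IsNilpotentMul (fun a b : A => m a b)) :
    ∀ k, finrank K (stepPower m k) ≤ finrank K A - k
  | 0 => by rw [stepPower, finrank_top, Nat.sub_zero]
  | k + 1 => by
    have ih := finrank_stepPower_le hnil k
    rcases (stepPower_succ_le m k).lt_or_eq with hlt | heq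
    · have := Submodule.finrank_lt_finrank_of_lt hlt
      omega
    · rw [heq, stepPower_eq_bot_of_succ_eq m hnil heq, finrank_bot]
      exact Nat.zero_le _

lemma stepPower_finrank_eq_bot (hnil : IsNilpotentMul (fun a b : A => m a b)) :
    stepPower m (finrank K A) = ⊥ :=
  Submodule.finrank_eq_zero.1 <| Nat.eq_zero_of_le_zero <|
    (finrank_stepPower_le m hnil _).trans (Nat.sub_self _).le

end FiniteDimensional

/-- Every 3-dimensional nilpotent complex algebra is a CD-algebra. -/
theorem threeDim_nilpotent_is_CD {A : Type*} [AddCommGroup A] [Module ℂ A]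
    (m : A →ₗ[ℂ] A →ₗ[ℂ] A)
    (hdim : Module.finrank ℂ A = 3)
    (hnil : IsNilpotentMul (fun a b : A => m a b)) :
    IsCD (fun a b : A => m a b) := by
  have : FiniteDimensional ℂ A := Module.finite_of_finrank_eq_succ hdim
  apply isCD_of_stepPower_three_eq_bot m
  rw [← hdim]
  exact stepPower_finrank_eq_bot m hnil
end

section
/- Let A be an n-dimensional CD-algebra over ℂ with annihilator Ann(A) of dimension m ≠ 0. Then there exists an (n−m)-dimensional CD-algebra A' and a CD-cocycle θ ∈ Z²_CD(A', V) with Ann(A') ∩ Ann(θ) = 0, where V is an m-dimensional vector space, such that A ≅ A'_θ and A/Ann(A) ≅ A'. -/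
/-! Split the quotient map `A → A ⧸ N` by a linear equivalence `φ : A ≃ (A ⧸ N) × N`. Since `N`
annihilates `A`, the product of `A` transported through `φ` only sees the `A ⧸ N`-components; its
two components are the quotient product `m'` and the cocycle `θ`. The CD identities for both are
images of those of `A` under the surjection `A → A ⧸ N`, and an element of `A ⧸ N` annihilated by
`m'` and `θ` lifts to an element of `Ann(A) = N`, hence vanishes. -/

theorem isCD_iff_isCDCocycle_self {A : Type*} [AddCommGroup A] (m : A → A → A) :
    IsCD m ↔ IsCDCocycle m m :=
  Iff.rfl

theorem IsCDCocycle.map {A B V W : Type*} [AddCommGroup A] [AddCommGroup B] [AddCommGroup V]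
    [AddCommGroup W] {m : A → A → A} {θ : A → A → V} (h : IsCDCocycle m θ)
    {m' : B → B → B} {θ' : B → B → W} (f : A →+ B) (hf : Function.Surjective f) (g : V →+ W)
    (hm : ∀ x y, m' (f x) (f y) = f (m x y)) (hθ : ∀ x y, θ' (f x) (f y) = g (θ x y)) :
    IsCDCocycle m' θ' := by
  obtain ⟨h₁, h₂, h₃⟩ := h
  refine ⟨?_, ?_, ?_⟩ <;> intro a b x y <;>
    obtain ⟨a, rfl⟩ := hf a <;> obtain ⟨b, rfl⟩ := hf b <;>
    obtain ⟨x, rfl⟩ := hf x <;> obtain ⟨y, rfl⟩ := hf y <;>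
    simp only [← map_sub, hm, hθ, ← map_add]
  exacts [congrArg g (h₁ a b x y), congrArg g (h₂ a b x y), congrArg g (h₃ a b x y)]

theorem IsCD.map {A B : Type*} [AddCommGroup A] [AddCommGroup B] {m : A → A → A}
    (h : IsCD m) {m' : B → B → B} (f : A →+ B) (hf : Function.Surjective f)
    (hm : ∀ x y, m' (f x) (f y) = f (m x y)) : IsCD m' :=
  ((isCD_iff_isCDCocycle_self m).mp h).map f hf f hm hm

section Splitting

variable {K A : Type*} [Field K] [AddCommGroup A] [Module K A]

theorem Submodule.exists_linearEquiv_quotient_prod (N : Submodule K A) :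
    ∃ φ : A ≃ₗ[K] (A ⧸ N) × N, (∀ x, (φ x).1 = N.mkQ x) ∧ ∀ n : N, φ.symm (0, n) = n := by
  obtain ⟨s, hs⟩ := N.mkQ.exists_rightInverse_of_surjective N.range_mkQ
  obtain ⟨e, he_inl, he_snd⟩ :=
    (LinearMap.exact_subtype_mkQ N).splitSurjectiveEquiv N.injective_subtype ⟨s, hs⟩
  refine ⟨e.trans (LinearEquiv.prodComm K _ _), fun x => ?_, fun n => ?_⟩
  · simp [he_snd]
  · simpa using (LinearMap.congr_fun he_inl n).symm

variable (m : A →ₗ[K] A →ₗ[K] A) {N : Submodule K A}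

def splitMul (φ : A ≃ₗ[K] (A ⧸ N) × N) : (A ⧸ N) →ₗ[K] (A ⧸ N) →ₗ[K] (A ⧸ N) × N :=
  (m.compl₁₂ (φ.symm.toLinearMap ∘ₗ .inl K _ _) (φ.symm.toLinearMap ∘ₗ .inl K _ _)).compr₂
    φ.toLinearMap

variable {m} {φ : A ≃ₗ[K] (A ⧸ N) × N}

theorem LinearEquiv.symm_fst_add_snd (hφ : ∀ n : N, φ.symm (0, n) = n) (x : A) :
    φ.symm ((φ x).1, 0) + (φ x).2 = x := by
  rw [← hφ, ← map_add, Prod.mk_add_mk, add_zero, zero_add, Prod.mk.eta, symm_apply_apply]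

theorem map_mul_eq_splitMul (hN : ∀ n ∈ N, ∀ a, m n a = 0 ∧ m a n = 0)
    (hφ : ∀ n : N, φ.symm (0, n) = n) (x y : A) :
    φ (m x y) = splitMul m φ (φ x).1 (φ y).1 := by
  conv_lhs => rw [← φ.symm_fst_add_snd hφ x, ← φ.symm_fst_add_snd hφ y]
  simp [splitMul, (hN _ (φ x).2.2 _).1, (hN _ (φ y).2.2 _).2]

theorem splitMul_mkQ (hN : ∀ n ∈ N, ∀ a, m n a = 0 ∧ m a n = 0)
    (hφ₁ : ∀ x, (φ x).1 = N.mkQ x) (hφ₂ : ∀ n : N, φ.symm (0, n) = n) (x y : A) :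
    splitMul m φ (N.mkQ x) (N.mkQ y) = φ (m x y) := by
  rw [← hφ₁, ← hφ₁, map_mul_eq_splitMul hN hφ₂]

theorem eq_zero_of_splitMul_eq_zero (hN : ∀ x, x ∈ N ↔ ∀ a, m x a = 0 ∧ m a x = 0)
    (hφ₁ : ∀ x, (φ x).1 = N.mkQ x) (hφ₂ : ∀ n : N, φ.symm (0, n) = n) {z : A ⧸ N}
    (hz : ∀ a, splitMul m φ z a = 0 ∧ splitMul m φ a z = 0) : z = 0 := by
  set x := φ.symm (z, 0)
  have hx : (φ x).1 = z := by simp [x]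
  have hxN : x ∈ N := by
    refine (hN x).mpr fun a => ⟨φ.map_eq_zero_iff.mp ?_, φ.map_eq_zero_iff.mp ?_⟩ <;>
      rw [map_mul_eq_splitMul (fun n hn => ((hN n).mp hn)) hφ₂, hx]
    exacts [(hz _).1, (hz _).2]
  rw [← hx, hφ₁]
  exact (Submodule.Quotient.mk_eq_zero N).mpr hxN

end Splitting

theorem CD_is_central_extension_general {A : Type*} [AddCommGroup A] [Module ℂ A]
    (m : A →ₗ[ℂ] A →ₗ[ℂ] A) (hCD : IsCD (fun a b : A => m a b))
    (N : Submodule ℂ A)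
    (hN : (N : Set A) = {x : A | ∀ a : A, m x a = 0 ∧ m a x = 0}) :
    ∃ (m' : (A ⧸ N) →ₗ[ℂ] (A ⧸ N) →ₗ[ℂ] (A ⧸ N))
      (θ : (A ⧸ N) →ₗ[ℂ] (A ⧸ N) →ₗ[ℂ] N),
      IsCD (fun a b : A ⧸ N => m' a b) ∧
      IsCDCocycle (fun a b : A ⧸ N => m' a b) (fun a b => θ a b) ∧
      (∀ x y : A, m' (N.mkQ x) (N.mkQ y) = N.mkQ (m x y)) ∧
      ({x : A ⧸ N | ∀ a : A ⧸ N, m' x a = 0 ∧ m' a x = 0} ∩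
         {x : A ⧸ N | ∀ a : A ⧸ N, θ x a = 0 ∧ θ a x = 0} = {0}) ∧
      ∃ φ : A ≃ₗ[ℂ] (A ⧸ N) × N,
        ∀ x y : A, φ (m x y) = (m' (φ x).1 (φ y).1, θ (φ x).1 (φ y).1) := by
  have hAnn (x : A) : x ∈ N ↔ ∀ a, m x a = 0 ∧ m a x = 0 := Set.ext_iff.mp hN x
  obtain ⟨φ, hφ₁, hφ₂⟩ := N.exists_linearEquiv_quotient_prod
  have hNAnn (n : A) (hn : n ∈ N) := (hAnn n).mp hn
  have hmkQ := splitMul_mkQ hNAnn hφ₁ hφ₂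
  have hm' (x y : A) : (splitMul m φ (N.mkQ x) (N.mkQ y)).1 = N.mkQ (m x y) := by
    rw [hmkQ, hφ₁]
  refine ⟨(splitMul m φ).compr₂ (.fst ℂ _ _), (splitMul m φ).compr₂ (.snd ℂ _ _),
    hCD.map N.mkQ.toAddMonoidHom N.mkQ_surjective hm',
    ((isCD_iff_isCDCocycle_self _).mp hCD).map N.mkQ.toAddMonoidHom N.mkQ_surjective
      (LinearMap.snd ℂ _ _ ∘ₗ φ.toLinearMap).toAddMonoidHom hm'
      fun x y => congrArg Prod.snd (hmkQ x y),
    hm', ?_, φ, map_mul_eq_splitMul hNAnn hφ₂⟩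
  ext z
  simp only [Set.mem_inter_iff, Set.mem_ofPred_eq, Set.mem_singleton_iff]
  refine ⟨fun ⟨h₁, h₂⟩ => eq_zero_of_splitMul_eq_zero hAnn hφ₁ hφ₂ fun a =>
    ⟨Prod.ext (h₁ a).1 (h₂ a).1, Prod.ext (h₁ a).2 (h₂ a).2⟩, ?_⟩
  rintro rfl
  simp

/-- Every n-dimensional CD-algebra with nonzero annihilator is a central extension
of the (n-m)-dimensional CD-algebra A/Ann(A) by a cocycle θ with Ann(A/Ann A) ∩ Ann(θ) = 0. -/
theorem CD_is_central_extension {A : Type*} [AddCommGroup A] [Module ℂ A]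
    [FiniteDimensional ℂ A]
    (m : A →ₗ[ℂ] A →ₗ[ℂ] A) (hCD : IsCD (fun a b : A => m a b))
    (N : Submodule ℂ A)
    (hN : (N : Set A) = {x : A | ∀ a : A, m x a = 0 ∧ m a x = 0})
    (hm : N ≠ ⊥) :
    ∃ (m' : (A ⧸ N) →ₗ[ℂ] (A ⧸ N) →ₗ[ℂ] (A ⧸ N))
      (θ : (A ⧸ N) →ₗ[ℂ] (A ⧸ N) →ₗ[ℂ] N),
      IsCD (fun a b : A ⧸ N => m' a b) ∧
      IsCDCocycle (fun a b : A ⧸ N => m' a b) (fun a b => θ a b) ∧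
      (∀ x y : A, m' (N.mkQ x) (N.mkQ y) = N.mkQ (m x y)) ∧
      ({x : A ⧸ N | ∀ a : A ⧸ N, m' x a = 0 ∧ m' a x = 0} ∩
         {x : A ⧸ N | ∀ a : A ⧸ N, θ x a = 0 ∧ θ a x = 0} = {0}) ∧
      ∃ φ : A ≃ₗ[ℂ] (A ⧸ N) × N,
        ∀ x y : A, φ (m x y) = (m' (φ x).1 (φ y).1, θ (φ x).1 (φ y).1) :=
  CD_is_central_extension_general m hCD N hN
end

section
/- Let A be the 3-dimensional complex algebra with basis e1, e2, e3 and only nonzero product e1e1 = e2. Then the automorphism group of A consists exactly of the linear maps whose matrix in the basis (e1, e2, e3) has the form [[x,0,0],[y,x²,u],[z,0,v]] with x(x²v − 0) ≠ 0, i.e. x ≠ 0 and v ≠ 0. -/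
/-- Basis vectors of ℂ³. -/
noncomputable def e3 (i : Fin 3) : Fin 3 → ℂ := Pi.single i 1

/-- The algebra with e1e1 = e2 (all other products zero). -/
noncomputable def mulCD3s01 (u v : Fin 3 → ℂ) : Fin 3 → ℂ :=
  Pi.single (1 : Fin 3) (u 0 * v 0)

/-!
Since `u v = (u₀ v₀) e₂`, a linear map `φ` is multiplicative exactly when `φ(e₂) = x² e₂` and
the first coordinate transforms as `(φ w)₀ = x w₀` for one scalar `x`; comparing
`φ(w e₁) = φ(w) φ(e₁)` gives the latter once `x = (φ e₁)₀` is known to be nonzero, which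
injectivity provides. In the basis `e₁, e₂, e₃` this is the matrix shape of the statement, and
`v ≠ 0` because otherwise `φ(e₃)` would lie in `ℂ e₂ = φ(ℂ e₂)`.
-/

@[simp] lemma e3_apply_self (i : Fin 3) : e3 i i = 1 := Pi.single_eq_same i 1

@[simp] lemma e3_apply_of_ne {i j : Fin 3} (h : j ≠ i) : e3 i j = 0 := Pi.single_eq_of_ne h 1

lemma eq_e3_expansion (w : Fin 3 → ℂ) : w = w 0 • e3 0 + w 1 • e3 1 + w 2 • e3 2 := by
  funext i; fin_cases i <;> simp [e3]

lemma mulCD3s01_eq_smul_e3_one (u v : Fin 3 → ℂ) : mulCD3s01 u v = (u 0 * v 0) • e3 1 := by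
  funext i; fin_cases i <;> simp [mulCD3s01, e3]

section MapMul

variable {φ : (Fin 3 → ℂ) →ₗ[ℂ] (Fin 3 → ℂ)}

lemma map_mulCD3s01_of_apply_zero {x : ℂ} (h0 : ∀ w, φ w 0 = x * w 0)
    (h1 : φ (e3 1) = x ^ 2 • e3 1) (u v : Fin 3 → ℂ) :
    φ (mulCD3s01 u v) = mulCD3s01 (φ u) (φ v) := by
  rw [mulCD3s01_eq_smul_e3_one, mulCD3s01_eq_smul_e3_one, map_smul, h1, h0, h0, smul_smul]
  ring_nf

variable (h : ∀ u v, φ (mulCD3s01 u v) = mulCD3s01 (φ u) (φ v))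
include h

lemma apply_e3_one_of_map_mulCD3s01 : φ (e3 1) = φ (e3 0) 0 ^ 2 • e3 1 := by
  have he : mulCD3s01 (e3 0) (e3 0) = e3 1 := by simp [mulCD3s01_eq_smul_e3_one]
  simpa only [he, mulCD3s01_eq_smul_e3_one, ← sq] using h (e3 0) (e3 0)

lemma apply_e3_zero_zero_ne_zero_of_map_mulCD3s01 (hφ : Function.Injective φ) :
    φ (e3 0) 0 ≠ 0 := by
  intro hx
  have : φ (e3 1) = φ 0 := by rw [apply_e3_one_of_map_mulCD3s01 h, hx, map_zero]; simp
  simpa using congrFun (hφ this) 1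

lemma apply_zero_of_map_mulCD3s01 (hφ : Function.Injective φ) (w : Fin 3 → ℂ) :
    φ w 0 = φ (e3 0) 0 * w 0 := by
  have hx := apply_e3_zero_zero_ne_zero_of_map_mulCD3s01 h hφ
  have hw := congrFun (h w (e3 0)) 1
  rw [mulCD3s01_eq_smul_e3_one, mulCD3s01_eq_smul_e3_one, map_smul,
    apply_e3_one_of_map_mulCD3s01 h] at hw
  simp only [Pi.smul_apply, e3_apply_self, smul_eq_mul, mul_one] at hw
  exact mul_right_cancel₀ hx (by linear_combination -hw)

end MapMul

lemma apply_e3_two_ne_smul_e3_one {φ : (Fin 3 → ℂ) →ₗ[ℂ] (Fin 3 → ℂ)}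
    (hφ : Function.Injective φ) {x : ℂ} (hx : x ≠ 0) (h1 : φ (e3 1) = x ^ 2 • e3 1) (c : ℂ) :
    φ (e3 2) ≠ c • e3 1 := by
  intro h2
  have : φ (e3 2) = φ ((c / x ^ 2) • e3 1) := by
    rw [h2, map_smul, h1, smul_smul, div_mul_cancel₀ c (pow_ne_zero 2 hx)]
  simpa using congrFun (hφ this) 2

/-- The automorphisms of the algebra e1e1 = e2 are exactly the maps with matrix
[[x,0,0],[y,x²,u],[z,0,v]] with x ≠ 0 and v ≠ 0. -/
theorem aut_of_CD3s01 (φ : (Fin 3 → ℂ) ≃ₗ[ℂ] (Fin 3 → ℂ)) :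
    (∀ u v : Fin 3 → ℂ, φ (mulCD3s01 u v) = mulCD3s01 (φ u) (φ v)) ↔
      ∃ x y z u v : ℂ, x ≠ 0 ∧ v ≠ 0 ∧
        φ (e3 0) = x • e3 0 + y • e3 1 + z • e3 2 ∧
        φ (e3 1) = (x ^ 2) • e3 1 ∧
        φ (e3 2) = u • e3 1 + v • e3 2 := by
  constructor
  · intro h
    have hx := apply_e3_zero_zero_ne_zero_of_map_mulCD3s01 (φ := φ.toLinearMap) h φ.injective
    have h0 := apply_zero_of_map_mulCD3s01 (φ := φ.toLinearMap) h φ.injective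
    have h1 := apply_e3_one_of_map_mulCD3s01 (φ := φ.toLinearMap) h
    simp only [LinearEquiv.coe_coe] at hx h0 h1
    have h2 : φ (e3 2) = φ (e3 2) 1 • e3 1 + φ (e3 2) 2 • e3 2 := by
      conv_lhs => rw [eq_e3_expansion (φ (e3 2)), h0, e3_apply_of_ne (by decide)]
      rw [mul_zero, zero_smul, zero_add]
    refine ⟨_, _, _, _, _, hx, fun hv => ?_, eq_e3_expansion _, h1, h2⟩
    exact apply_e3_two_ne_smul_e3_one φ.injective hx h1 _ (by simpa [hv] using h2)
  · rintro ⟨x, y, z, u, v, -, -, h0, h1, h2⟩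
    refine map_mulCD3s01_of_apply_zero (φ := φ.toLinearMap) (fun w => ?_) h1
    conv_lhs => rw [eq_e3_expansion w]
    simp [h0, h1, h2, mul_comm]
end

section
/- The 4-dimensional complex algebra C with basis e1,e2,e3,e4 and nonzero products e1e1 = e2, e2e1 = e4, e2e2 = e3 is a nilpotent CD-algebra whose annihilator is 2-dimensional, spanned by e3 and e4. -/
/-- Basis vectors of ℂ⁴. -/
noncomputable def e4 (i : Fin 4) : Fin 4 → ℂ := Pi.single i 1

/-- The algebra with e1e1 = e2, e2e1 = e4, e2e2 = e3. -/
noncomputable def mulC405 (u v : Fin 4 → ℂ) : Fin 4 → ℂ :=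
  Pi.single (1 : Fin 4) (u 0 * v 0) + Pi.single (2 : Fin 4) (u 1 * v 1) +
    Pi.single (3 : Fin 4) (u 1 * v 0)

/-!
Every product lies in the span of `e₂, e₃, e₄`, on which left and right multiplication by
anything lands in the span of `e₃, e₄`; and the vectors with vanishing first two coordinates,
i.e. the span of `e₃, e₄`, are exactly the annihilator. So every word of length at least three
evaluates into the annihilator, and every word of length at least six vanishes, since one of its
two factors has length at least three. The CD identities are polynomial identities in the
coordinates and are checked one coordinate at a time.
-/

lemma isNilpotentMul_of_magEval_mem_annihilator {A : Type*} [AddCommGroup A] (m : A → A → A)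
    (n : ℕ) (h : ∀ w : FreeMagma A, n + 1 ≤ magLen w → ∀ a, m (magEval m w) a = 0 ∧
      m a (magEval m w) = 0) :
    IsNilpotentMul m := by
  refine ⟨2 * n + 2, fun w hw => ?_⟩
  cases w with
  | of a => simp only [magLen] at hw; omega
  | mul u v =>
    simp only [magLen] at hw
    rcases le_or_gt (n + 1) (magLen u) with hu | hu
    · exact (h u hu _).1
    · exact (h v (by omega) _).2

@[simp] lemma mulC405_apply_zero (u v : Fin 4 → ℂ) : mulC405 u v 0 = 0 := by
  simp [mulC405]

@[simp] lemma mulC405_apply_one (u v : Fin 4 → ℂ) : mulC405 u v 1 = u 0 * v 0 := by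
  simp [mulC405]

@[simp] lemma mulC405_apply_two (u v : Fin 4 → ℂ) : mulC405 u v 2 = u 1 * v 1 := by
  simp [mulC405]

@[simp] lemma mulC405_apply_three (u v : Fin 4 → ℂ) : mulC405 u v 3 = u 1 * v 0 := by
  simp [mulC405]

lemma isCD_mulC405 : IsCD mulC405 := by
  refine ⟨?_, ?_, ?_⟩ <;>
  · intro a b x y
    ext i
    fin_cases i <;> simp

lemma mulC405_annihilates_iff (x : Fin 4 → ℂ) :
    (∀ a, mulC405 x a = 0 ∧ mulC405 a x = 0) ↔ x 0 = 0 ∧ x 1 = 0 := by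
  constructor
  · intro h
    have h1 := congrFun (h (e4 0)).1 1
    have h3 := congrFun (h (e4 0)).1 3
    simp_all [e4]
  · rintro ⟨h0, h1⟩ a
    constructor <;>
    · ext i
      fin_cases i <;> simp [h0, h1]

lemma magEval_mulC405_apply_zero (w : FreeMagma (Fin 4 → ℂ)) (h : 2 ≤ magLen w) :
    magEval mulC405 w 0 = 0 := by
  cases w with
  | of a => simp only [magLen] at h; omega
  | mul u v => exact mulC405_apply_zero _ _

lemma magEval_mulC405_apply_one (w : FreeMagma (Fin 4 → ℂ)) (h : 3 ≤ magLen w) :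
    magEval mulC405 w 1 = 0 := by
  cases w with
  | of a => simp only [magLen] at h; omega
  | mul u v =>
    simp only [magLen] at h
    simp only [magEval, mulC405_apply_one]
    rcases le_or_gt 2 (magLen u) with hu | hu
    · rw [magEval_mulC405_apply_zero u hu, zero_mul]
    · rw [magEval_mulC405_apply_zero v (by omega), mul_zero]

lemma isNilpotentMul_mulC405 : IsNilpotentMul mulC405 :=
  isNilpotentMul_of_magEval_mem_annihilator mulC405 2 fun w hw =>
    (mulC405_annihilates_iff _).2
      ⟨magEval_mulC405_apply_zero w (by omega), magEval_mulC405_apply_one w hw⟩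

lemma mem_span_e4_two_three_iff (x : Fin 4 → ℂ) :
    x ∈ Submodule.span ℂ {e4 2, e4 3} ↔ x 0 = 0 ∧ x 1 = 0 := by
  rw [Submodule.mem_span_pair]
  constructor
  · rintro ⟨a, b, rfl⟩
    simp [e4]
  · rintro ⟨h0, h1⟩
    refine ⟨x 2, x 3, ?_⟩
    ext i
    fin_cases i <;> simp [e4, h0, h1]

/-- The algebra e1e1=e2, e2e1=e4, e2e2=e3 is a nilpotent CD-algebra whose
annihilator is spanned by e3 and e4. -/
theorem C405_is_nilpotent_CD :
    IsCD mulC405 ∧ IsNilpotentMul mulC405 ∧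
      {x : Fin 4 → ℂ | ∀ a : Fin 4 → ℂ, mulC405 x a = 0 ∧ mulC405 a x = 0} =
        ↑(Submodule.span ℂ {e4 2, e4 3}) := by
  refine ⟨isCD_mulC405, isNilpotentMul_mulC405, ?_⟩
  ext x
  rw [Set.mem_ofPred_eq, SetLike.mem_coe, mulC405_annihilates_iff, mem_span_e4_two_three_iff]
end
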